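/- arXiv:2011.01396 — 3 statements merged into one kernel-verified Lean document; each statement's English description precedes it below -/
import Mathlib

section
/- Let X, Y, Z be real Hilbert spaces and A : X → X', S : Y → Y', B₁ : X → Y', B : X → Z' bounded linear operators. Let V = ker B. Assume: (i) A is coercive on V with constant α > 0, i.e. A(τ)(τ) ≥ α‖τ‖² for all τ ∈ V; (ii) S(ψ)(ψ) ≥ 0 for all ψ ∈ Y; (iii) B₁ satisfies the inf-sup condition on V × Y with constant β₁ > 0; (iv) B satisfies the inf-sup condition on X × Z with constant β > 0. Then for each (F₁, F₂, G) ∈ X' × Y' × Z' there exists a unique (σ, φ, u) ∈ X × Y × Z such that A(σ) + B₁'(φ) + B'(u) = F₁ in X', B₁(σ) − S(φ) = F₂ in Y', and B(σ) = G in Z'. Moreover ‖(σ,φ,u)‖ ≤ C(‖F₁‖ + ‖F₂‖ + ‖G‖) with C depending only on α, β₁, β, ‖A‖, ‖S‖, ‖B₁‖. -/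
/-!
Lifting `G` through the inf-sup condition for `B` reduces the a priori estimate to data with
`G = 0`, where `σ ∈ ker B`: coercivity of `A` on the kernel and `S ≥ 0` give
`α‖σ‖² ≤ ‖F₁‖‖σ‖ + ‖F₂‖‖φ‖`, the inf-sup condition for `B₁` bounds `‖φ‖` by `‖F₁‖ + ‖A‖‖σ‖`,
and the one for `B` then bounds `‖u‖`. Existence follows by viewing the system as a single
bilinear form on the Hilbert space `X × Y × Z`: the a priori estimate bounds it below, and the
same estimate for its transpose (the system for `Aᵀ`, `Sᵀ`) makes the transpose injective, so
the associated Riesz operator has closed dense range.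
-/

open InnerProductSpace ContinuousLinearMap

theorem le_of_le_iSup_div_norm {E : Type*} [SeminormedAddGroup E] {P : E → Prop} {f : E → ℝ}
    {r c : ℝ} (h : r ≤ ⨆ τ : {τ : E // P τ}, f τ / ‖(τ : E)‖) (hc : 0 ≤ c)
    (hf : ∀ τ, P τ → f τ ≤ c * ‖τ‖) : r ≤ c :=
  h.trans <| Real.iSup_le (fun τ => div_le_of_le_mul₀ (norm_nonneg _) hc (hf τ τ.2)) hc

theorem le_mul_of_mul_sq_le {a b t D : ℝ} (ha : 0 < a) (hb : 0 ≤ b) (hD : 0 ≤ D)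
    (h : a * t ^ 2 ≤ D * (b * t + D)) : t ≤ (1 + (b + 1) / a) * D := by
  have hbD : 0 ≤ (b + 1) / a * D := by positivity
  rcases le_or_gt t D with htD | hDt
  · linarith
  · have : a * t * t ≤ (b + 1) * D * t := by nlinarith
    have : a * t ≤ (b + 1) * D := le_of_mul_le_mul_right this (hD.trans_lt hDt)
    have : t ≤ (b + 1) / a * D := by rw [div_mul_eq_mul_div, le_div_iff₀ ha]; linarith
    linarith

local postfix:1024 "♯" => continuousLinearMapOfBilin (𝕜 := ℝ)

theorem exists_apply_eq_of_bounded_below_of_flip_injective {H : Type*} [NormedAddCommGroup H]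
    [InnerProductSpace ℝ H] [CompleteSpace H] (a : H →L[ℝ] H →L[ℝ] ℝ) {C : ℝ}
    (ha : ∀ p, ‖p‖ ≤ C * ‖a p‖) (ha' : ∀ q, a.flip q = 0 → q = 0) (f : H →L[ℝ] ℝ) :
    ∃ p, a p = f := by
  have hnorm : ∀ p, ‖a♯ p‖ = ‖a p‖ := fun p => (toDual ℝ H).symm.norm_map (a p)
  have hanti : AntilipschitzWith C.toNNReal a♯ :=
    antilipschitz_of_bound _ fun p => by
      rw [hnorm]; exact (ha p).trans (by gcongr; exact C.le_coe_toNNReal)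
  have hclosed : IsClosed (a♯.range : Set H) := hanti.isClosed_range a♯.uniformContinuous
  have := hclosed.completeSpace_coe
  have hrange : a♯.range = ⊤ := by
    rw [← a♯.range.orthogonal_orthogonal, Submodule.eq_top_iff']
    intro v w hw
    have : w = 0 := ha' w <| ext fun p => by
      rw [flip_apply, ← continuousLinearMapOfBilin_apply]
      exact hw _ ⟨p, rfl⟩
    simp [this]
  obtain ⟨p, hp⟩ := LinearMap.range_eq_top.mp hrange ((toDual ℝ H).symm f)
  refine ⟨p, ext fun q => ?_⟩
  rw [← continuousLinearMapOfBilin_apply, ← toDual_symm_apply (𝕜 := ℝ)]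
  exact congrArg (⟪·, q⟫_ℝ) hp

/- Lax–Milgram for the coercive form `(v, w) ↦ ⟪R v, R w⟫`, where `R` is the Riesz
representative of `B.flip`; the preimage is `R w`. -/
theorem exists_apply_eq_and_mul_norm_le {X Z : Type*} [NormedAddCommGroup X]
    [InnerProductSpace ℝ X] [CompleteSpace X] [NormedAddCommGroup Z] [InnerProductSpace ℝ Z]
    [CompleteSpace Z] (B : X →L[ℝ] Z →L[ℝ] ℝ) {β : ℝ} (hβ : 0 < β)
    (hB : ∀ v, β * ‖v‖ ≤ ‖B.flip v‖) (G : Z →L[ℝ] ℝ) : ∃ τ, B τ = G ∧ β * ‖τ‖ ≤ ‖G‖ := by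
  let R : Z →L[ℝ] X := (toDual ℝ X).symm.toContinuousLinearEquiv.toContinuousLinearMap.comp B.flip
  have hR : ∀ v τ, B τ v = ⟪R v, τ⟫_ℝ := fun v τ => by simp [R, toDual_symm_apply]
  have hRnorm : ∀ v, ‖R v‖ = ‖B.flip v‖ := fun v => (toDual ℝ X).symm.norm_map _
  have hcoer : IsCoercive (B.comp R) := by
    refine ⟨β ^ 2, by positivity, fun v => ?_⟩
    rw [comp_apply, hR, real_inner_self_eq_norm_mul_norm, hRnorm]
    nlinarith [mul_self_le_mul_self (by positivity) (hB v)]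
  set w := hcoer.continuousLinearEquivOfBilin.symm ((toDual ℝ Z).symm G)
  have hw : B (R w) = G := ext fun v => by
    rw [← comp_apply, ← hcoer.continuousLinearEquivOfBilin_apply,
      ContinuousLinearEquiv.apply_symm_apply, toDual_symm_apply]
  refine ⟨R w, hw, ?_⟩
  have hsq : ‖R w‖ ^ 2 ≤ ‖G‖ * ‖w‖ := by
    rw [sq, ← real_inner_self_eq_norm_mul_norm, ← hR, hw]
    exact (Real.le_norm_self _).trans (G.le_opNorm w)
  have hβsq : β * ‖R w‖ * ‖R w‖ ≤ ‖G‖ * ‖R w‖ := by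
    nlinarith [mul_le_mul_of_nonneg_left (hRnorm w ▸ hB w) (norm_nonneg G)]
  rcases (norm_nonneg (R w)).eq_or_lt with h0 | hpos
  · simp [← h0]
  · exact le_of_mul_le_mul_right hβsq hpos

theorem mul_norm_le_norm_flip_of_le_iSup {X Z : Type*} [NormedAddCommGroup X] [NormedSpace ℝ X]
    [NormedAddCommGroup Z] [NormedSpace ℝ Z] {B : X →L[ℝ] Z →L[ℝ] ℝ} {β : ℝ}
    (hB : ∀ v : Z, β * ‖v‖ ≤ ⨆ τ : {τ : X // τ ≠ 0}, B τ v / ‖(τ : X)‖) (v : Z) :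
    β * ‖v‖ ≤ ‖B.flip v‖ :=
  le_of_le_iSup_div_norm (f := fun τ => B τ v) (hB v) (norm_nonneg _) fun τ _ =>
    (Real.le_norm_self _).trans ((B.flip v).le_opNorm τ)

section Estimates

variable {X Y Z : Type*} [NormedAddCommGroup X] [NormedSpace ℝ X]
  [NormedAddCommGroup Y] [NormedSpace ℝ Y] [NormedAddCommGroup Z] [NormedSpace ℝ Z]
  (A : X →L[ℝ] X →L[ℝ] ℝ) (S : Y →L[ℝ] Y →L[ℝ] ℝ)
  (B₁ : X →L[ℝ] Y →L[ℝ] ℝ) (B : X →L[ℝ] Z →L[ℝ] ℝ)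

def IsSaddlePointSolution (F₁ : X →L[ℝ] ℝ) (F₂ : Y →L[ℝ] ℝ) (G : Z →L[ℝ] ℝ)
    (σ : X) (φ : Y) (u : Z) : Prop :=
  (∀ τ : X, A σ τ + B₁ τ φ + B τ u = F₁ τ) ∧ (∀ ψ : Y, B₁ σ ψ - S φ ψ = F₂ ψ) ∧
    (∀ v : Z, B σ v = G v)

variable {A S B₁ B}

theorem IsSaddlePointSolution.sub {F₁ F₁' : X →L[ℝ] ℝ} {F₂ F₂' : Y →L[ℝ] ℝ} {G G' : Z →L[ℝ] ℝ}
    {σ σ' : X} {φ φ' : Y} {u u' : Z} (h : IsSaddlePointSolution A S B₁ B F₁ F₂ G σ φ u)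
    (h' : IsSaddlePointSolution A S B₁ B F₁' F₂' G' σ' φ' u') :
    IsSaddlePointSolution A S B₁ B (F₁ - F₁') (F₂ - F₂') (G - G') (σ - σ') (φ - φ') (u - u') := by
  refine ⟨fun τ => ?_, fun ψ => ?_, fun v => ?_⟩ <;> simp only [map_sub, sub_apply]
  · linarith [h.1 τ, h'.1 τ]
  · linarith [h.2.1 ψ, h'.2.1 ψ]
  · rw [h.2.2 v, h'.2.2 v]

theorem isSaddlePointSolution_apply (σ : X) :
    IsSaddlePointSolution A S B₁ B (A σ) (B₁ σ) (B σ) σ 0 0 := by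
  refine ⟨fun τ => ?_, fun ψ => ?_, fun v => rfl⟩ <;> simp

theorem IsSaddlePointSolution.mul_norm_le {F₁ : X →L[ℝ] ℝ} {F₂ : Y →L[ℝ] ℝ} {G : Z →L[ℝ] ℝ}
    {σ : X} {φ : Y} {u : Z} (h : IsSaddlePointSolution A S B₁ B F₁ F₂ G σ φ u) {β : ℝ}
    (hB : ∀ v : Z, β * ‖v‖ ≤ ⨆ τ : {τ : X // τ ≠ 0}, B τ v / ‖(τ : X)‖) :
    β * ‖u‖ ≤ ‖F₁‖ + ‖A‖ * ‖σ‖ + ‖B₁‖ * ‖φ‖ :=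
  le_of_le_iSup_div_norm (f := fun τ => B τ u) (hB u) (by positivity) fun τ _ => by
    linarith [h.1 τ, (Real.le_norm_self _).trans (F₁.le_opNorm τ),
      neg_le_of_abs_le (A.le_opNorm₂ σ τ), neg_le_of_abs_le (B₁.le_opNorm₂ τ φ)]

theorem exists_norm_add_norm_le_of_isSaddlePointSolution_zero {α β₁ : ℝ} (hα : 0 < α)
    (hβ₁ : 0 < β₁) (hA : ∀ τ : X, (∀ v : Z, B τ v = 0) → α * ‖τ‖ ^ 2 ≤ A τ τ)
    (hS : ∀ ψ : Y, 0 ≤ S ψ ψ)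
    (hB₁ : ∀ ψ : Y,
      β₁ * ‖ψ‖ ≤ ⨆ τ : {τ : X // (∀ v : Z, B τ v = 0) ∧ τ ≠ 0}, B₁ τ ψ / ‖(τ : X)‖) :
    ∃ K, 0 ≤ K ∧ ∀ F₁ F₂ σ φ u, IsSaddlePointSolution A S B₁ B F₁ F₂ 0 σ φ u →
      ‖σ‖ + ‖φ‖ ≤ K * (‖F₁‖ + ‖F₂‖) := by
  set k := 1 + (β₁ + ‖A‖ + 1) / (α * β₁)
  have hk : 0 ≤ k := by positivity
  refine ⟨k + (1 + ‖A‖ * k) / β₁, by positivity, fun F₁ F₂ σ φ u h => ?_⟩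
  have hker : ∀ v, B σ v = 0 := h.2.2
  set D := ‖F₁‖ + ‖F₂‖
  have hD : 0 ≤ D := by positivity
  have energy : α * ‖σ‖ ^ 2 ≤ D * (‖σ‖ + ‖φ‖) :=
    calc α * ‖σ‖ ^ 2 ≤ A σ σ := hA σ hker
      _ = F₁ σ - F₂ φ - S φ φ := by linarith [h.1 σ, h.2.1 φ, hker u]
      _ ≤ D * (‖σ‖ + ‖φ‖) := by
        linarith [hS φ, (Real.le_norm_self _).trans (F₁.le_opNorm σ),
          neg_le_of_abs_le (F₂.le_opNorm φ), mul_nonneg (norm_nonneg F₁) (norm_nonneg φ),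
          mul_nonneg (norm_nonneg F₂) (norm_nonneg σ)]
  have infSup : β₁ * ‖φ‖ ≤ D + ‖A‖ * ‖σ‖ :=
    le_of_le_iSup_div_norm (f := fun τ => B₁ τ φ) (hB₁ φ) (by positivity) fun τ hτ => by
      linarith [h.1 τ, hτ.1 u, (Real.le_norm_self _).trans (F₁.le_opNorm τ),
        neg_le_of_abs_le (A.le_opNorm₂ σ τ), mul_nonneg (norm_nonneg F₂) (norm_nonneg τ)]
  have quadratic : α * β₁ * ‖σ‖ ^ 2 ≤ D * ((β₁ + ‖A‖) * ‖σ‖ + D) := by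
    linarith [mul_le_mul_of_nonneg_left energy hβ₁.le, mul_le_mul_of_nonneg_left infSup hD]
  have hσ : ‖σ‖ ≤ k * D := le_mul_of_mul_sq_le (mul_pos hα hβ₁) (by positivity) hD quadratic
  have hφ : ‖φ‖ ≤ (1 + ‖A‖ * k) / β₁ * D := by
    rw [div_mul_eq_mul_div, le_div_iff₀ hβ₁]
    linarith [mul_le_mul_of_nonneg_left hσ (norm_nonneg A)]
  linarith

end Estimates

section Hilbert

variable {X Y Z : Type*} [NormedAddCommGroup X] [InnerProductSpace ℝ X]
  [NormedAddCommGroup Y] [InnerProductSpace ℝ Y] [NormedAddCommGroup Z] [InnerProductSpace ℝ Z]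
  {A : X →L[ℝ] X →L[ℝ] ℝ} {S : Y →L[ℝ] Y →L[ℝ] ℝ}
  {B₁ : X →L[ℝ] Y →L[ℝ] ℝ} {B : X →L[ℝ] Z →L[ℝ] ℝ}

theorem exists_norm_le_of_isSaddlePointSolution [CompleteSpace X] [CompleteSpace Z]
    {α β₁ β : ℝ} (hα : 0 < α) (hβ₁ : 0 < β₁) (hβ : 0 < β)
    (hA : ∀ τ : X, (∀ v : Z, B τ v = 0) → α * ‖τ‖ ^ 2 ≤ A τ τ) (hS : ∀ ψ : Y, 0 ≤ S ψ ψ)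
    (hB₁ : ∀ ψ : Y,
      β₁ * ‖ψ‖ ≤ ⨆ τ : {τ : X // (∀ v : Z, B τ v = 0) ∧ τ ≠ 0}, B₁ τ ψ / ‖(τ : X)‖)
    (hB : ∀ v : Z, β * ‖v‖ ≤ ⨆ τ : {τ : X // τ ≠ 0}, B τ v / ‖(τ : X)‖) :
    ∃ C > 0, ∀ F₁ F₂ G σ φ u, IsSaddlePointSolution A S B₁ B F₁ F₂ G σ φ u →
      ‖σ‖ + ‖φ‖ + ‖u‖ ≤ C * (‖F₁‖ + ‖F₂‖ + ‖G‖) := by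
  obtain ⟨K, hK, hred⟩ := exists_norm_add_norm_le_of_isSaddlePointSolution_zero hα hβ₁ hA hS hB₁
  set c := ‖A‖ + ‖B₁‖
  set κ := K * (1 + c / β) + 1 / β
  have hκ : 0 ≤ κ := by positivity
  refine ⟨κ + (1 + c * κ) / β, by positivity, fun F₁ F₂ G σ φ u h => ?_⟩
  set D := ‖F₁‖ + ‖F₂‖ + ‖G‖
  obtain ⟨σG, hσG, hσGn⟩ :=
    exists_apply_eq_and_mul_norm_le B hβ (mul_norm_le_norm_flip_of_le_iSup hB) G
  have h₀ := h.sub (isSaddlePointSolution_apply (S := S) σG)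
  rw [hσG, sub_self, sub_zero, sub_zero] at h₀
  have hσG' : ‖σG‖ ≤ D / β := by rw [le_div_iff₀ hβ]; linarith [norm_nonneg F₁, norm_nonneg F₂]
  have hF₁ : ‖F₁ - A σG‖ ≤ ‖F₁‖ + ‖A‖ * ‖σG‖ :=
    (norm_sub_le _ _).trans (by gcongr; exact A.le_opNorm σG)
  have hF₂ : ‖F₂ - B₁ σG‖ ≤ ‖F₂‖ + ‖B₁‖ * ‖σG‖ :=
    (norm_sub_le _ _).trans (by gcongr; exact B₁.le_opNorm σG)
  have hσφ : ‖σ‖ + ‖φ‖ ≤ κ * D :=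
    calc ‖σ‖ + ‖φ‖ ≤ ‖σ - σG‖ + ‖φ‖ + ‖σG‖ := by linarith [norm_le_norm_sub_add σ σG]
      _ ≤ K * (‖F₁ - A σG‖ + ‖F₂ - B₁ σG‖) + ‖σG‖ := by gcongr; exact hred _ _ _ _ _ h₀
      _ ≤ K * (D + c * (D / β)) + D / β := by
        have hc : c * ‖σG‖ ≤ c * (D / β) := by gcongr
        refine add_le_add (mul_le_mul_of_nonneg_left ?_ hK) hσG'
        linarith [norm_nonneg G]
      _ = κ * D := by ring
  have hu : ‖u‖ ≤ (1 + c * κ) / β * D := by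
    rw [div_mul_eq_mul_div, le_div_iff₀ hβ]
    have hcσφ : ‖A‖ * ‖σ‖ + ‖B₁‖ * ‖φ‖ ≤ c * (κ * D) :=
      calc ‖A‖ * ‖σ‖ + ‖B₁‖ * ‖φ‖ ≤ c * (‖σ‖ + ‖φ‖) := by
            linarith [mul_nonneg (norm_nonneg A) (norm_nonneg φ),
              mul_nonneg (norm_nonneg B₁) (norm_nonneg σ)]
        _ ≤ c * (κ * D) := by gcongr
    linarith [h.mul_norm_le hB, norm_nonneg F₂, norm_nonneg G]
  linarith

abbrev TripleL2 (X Y Z : Type*) : Type _ := WithLp 2 (X × WithLp 2 (Y × Z))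

namespace TripleL2

open WithLp

def proj₁ : TripleL2 X Y Z →L[ℝ] X := fstL 2 ℝ X _

def proj₂ : TripleL2 X Y Z →L[ℝ] Y := fstL 2 ℝ Y Z ∘L sndL 2 ℝ X _

def proj₃ : TripleL2 X Y Z →L[ℝ] Z := sndL 2 ℝ Y Z ∘L sndL 2 ℝ X _

def inj₁ : X →L[ℝ] TripleL2 X Y Z :=
  (prodContinuousLinearEquiv 2 ℝ X _).symm.toContinuousLinearMap ∘L inl ℝ X _

def inj₂ : Y →L[ℝ] TripleL2 X Y Z :=
  (prodContinuousLinearEquiv 2 ℝ X _).symm.toContinuousLinearMap ∘L inr ℝ X _ ∘L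
    (prodContinuousLinearEquiv 2 ℝ Y Z).symm.toContinuousLinearMap ∘L inl ℝ Y Z

def inj₃ : Z →L[ℝ] TripleL2 X Y Z :=
  (prodContinuousLinearEquiv 2 ℝ X _).symm.toContinuousLinearMap ∘L inr ℝ X _ ∘L
    (prodContinuousLinearEquiv 2 ℝ Y Z).symm.toContinuousLinearMap ∘L inr ℝ Y Z

theorem norm_inj₁ (x : X) : ‖(inj₁ x : TripleL2 X Y Z)‖ = ‖x‖ := by simp [inj₁]

theorem norm_inj₂ (y : Y) : ‖(inj₂ y : TripleL2 X Y Z)‖ = ‖y‖ := by simp [inj₂]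

theorem norm_inj₃ (z : Z) : ‖(inj₃ z : TripleL2 X Y Z)‖ = ‖z‖ := by simp [inj₃]

theorem inj_proj_add (p : TripleL2 X Y Z) :
    inj₁ (proj₁ p) + inj₂ (proj₂ p) + inj₃ (proj₃ p) = p :=
  ofLp_injective 2 (Prod.ext (by simp [inj₁, inj₂, inj₃, proj₁])
    (ofLp_injective 2 (Prod.ext (by simp [inj₁, inj₂, inj₃, proj₂])
      (by simp [inj₁, inj₂, inj₃, proj₃]))))

theorem norm_le_norm_proj_add (p : TripleL2 X Y Z) : ‖p‖ ≤ ‖proj₁ p‖ + ‖proj₂ p‖ + ‖proj₃ p‖ := by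
  conv_lhs => rw [← inj_proj_add p]
  exact (norm_add₃_le ..).trans_eq (by rw [norm_inj₁, norm_inj₂, norm_inj₃])

end TripleL2

open TripleL2

variable (A S B₁ B) in
noncomputable def saddleForm : TripleL2 X Y Z →L[ℝ] TripleL2 X Y Z →L[ℝ] ℝ :=
  A.bilinearComp proj₁ proj₁ + B₁.flip.bilinearComp proj₂ proj₁ + B.flip.bilinearComp proj₃ proj₁ +
    B₁.bilinearComp proj₁ proj₂ - S.bilinearComp proj₂ proj₂ + B.bilinearComp proj₁ proj₃

theorem saddleForm_apply (p q : TripleL2 X Y Z) :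
    saddleForm A S B₁ B p q = A (proj₁ p) (proj₁ q) + B₁ (proj₁ q) (proj₂ p) +
      B (proj₁ q) (proj₃ p) + B₁ (proj₁ p) (proj₂ q) - S (proj₂ p) (proj₂ q) +
      B (proj₁ p) (proj₃ q) :=
  rfl

theorem saddleForm_flip : (saddleForm A S B₁ B).flip = saddleForm A.flip S.flip B₁ B := by
  ext p q
  simp only [flip_apply, saddleForm_apply]
  ring

theorem saddleForm_apply_eq_iff (p : TripleL2 X Y Z) (f : TripleL2 X Y Z →L[ℝ] ℝ) :
    saddleForm A S B₁ B p = f ↔ IsSaddlePointSolution A S B₁ B (f ∘L inj₁) (f ∘L inj₂)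
      (f ∘L inj₃) (proj₁ p) (proj₂ p) (proj₃ p) := by
  constructor
  · rintro rfl
    refine ⟨fun τ => ?_, fun ψ => ?_, fun v => ?_⟩ <;>
      simp [saddleForm_apply, proj₁, proj₂, proj₃, inj₁, inj₂, inj₃]
  · intro h
    ext q
    conv_lhs => rw [← inj_proj_add q]
    conv_rhs => rw [← inj_proj_add q]
    have h₁ := h.1 (proj₁ q)
    have h₂ := h.2.1 (proj₂ q)
    have h₃ := h.2.2 (proj₃ q)
    simp only [map_add, saddleForm_apply, comp_apply] at h₁ h₂ h₃ ⊢
    simp [proj₁, proj₂, proj₃, inj₁, inj₂, inj₃] at h₁ h₂ h₃ ⊢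
    linarith

theorem norm_le_mul_norm_saddleForm {C : ℝ} (hC : 0 ≤ C)
    (hbound : ∀ F₁ F₂ G σ φ u, IsSaddlePointSolution A S B₁ B F₁ F₂ G σ φ u →
      ‖σ‖ + ‖φ‖ + ‖u‖ ≤ C * (‖F₁‖ + ‖F₂‖ + ‖G‖)) (p : TripleL2 X Y Z) :
    ‖p‖ ≤ 3 * C * ‖saddleForm A S B₁ B p‖ := by
  set f := saddleForm A S B₁ B p
  have h₁ : ‖f ∘L inj₁‖ ≤ ‖f‖ := opNorm_le_bound _ (norm_nonneg f) fun x => by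
    simpa only [comp_apply, norm_inj₁] using f.le_opNorm (inj₁ x)
  have h₂ : ‖f ∘L inj₂‖ ≤ ‖f‖ := opNorm_le_bound _ (norm_nonneg f) fun y => by
    simpa only [comp_apply, norm_inj₂] using f.le_opNorm (inj₂ y)
  have h₃ : ‖f ∘L inj₃‖ ≤ ‖f‖ := opNorm_le_bound _ (norm_nonneg f) fun z => by
    simpa only [comp_apply, norm_inj₃] using f.le_opNorm (inj₃ z)
  calc ‖p‖ ≤ ‖proj₁ p‖ + ‖proj₂ p‖ + ‖proj₃ p‖ := norm_le_norm_proj_add p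
    _ ≤ C * (‖f ∘L inj₁‖ + ‖f ∘L inj₂‖ + ‖f ∘L inj₃‖) :=
      hbound _ _ _ _ _ _ ((saddleForm_apply_eq_iff p f).mp rfl)
    _ ≤ C * (‖f‖ + ‖f‖ + ‖f‖) := by gcongr
    _ = 3 * C * ‖f‖ := by ring

theorem exists_isSaddlePointSolution [CompleteSpace X] [CompleteSpace Y] [CompleteSpace Z]
    {α β₁ β : ℝ} (hα : 0 < α) (hβ₁ : 0 < β₁) (hβ : 0 < β)
    (hA : ∀ τ : X, (∀ v : Z, B τ v = 0) → α * ‖τ‖ ^ 2 ≤ A τ τ) (hS : ∀ ψ : Y, 0 ≤ S ψ ψ)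
    (hB₁ : ∀ ψ : Y,
      β₁ * ‖ψ‖ ≤ ⨆ τ : {τ : X // (∀ v : Z, B τ v = 0) ∧ τ ≠ 0}, B₁ τ ψ / ‖(τ : X)‖)
    (hB : ∀ v : Z, β * ‖v‖ ≤ ⨆ τ : {τ : X // τ ≠ 0}, B τ v / ‖(τ : X)‖)
    (F₁ : X →L[ℝ] ℝ) (F₂ : Y →L[ℝ] ℝ) (G : Z →L[ℝ] ℝ) :
    ∃ σ φ u, IsSaddlePointSolution A S B₁ B F₁ F₂ G σ φ u := by
  obtain ⟨C, hC, hbound⟩ := exists_norm_le_of_isSaddlePointSolution hα hβ₁ hβ hA hS hB₁ hB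
  obtain ⟨C', hC', hbound'⟩ := exists_norm_le_of_isSaddlePointSolution (A := A.flip)
    (S := S.flip) hα hβ₁ hβ (by simpa using hA) (by simpa using hS) hB₁ hB
  have hinj : ∀ q, (saddleForm A S B₁ B).flip q = 0 → q = 0 := fun q hq => by
    have := norm_le_mul_norm_saddleForm hC'.le hbound' q
    rwa [← saddleForm_flip, hq, opNorm_zero, mul_zero, norm_le_zero_iff] at this
  obtain ⟨p, hp⟩ := exists_apply_eq_of_bounded_below_of_flip_injective (saddleForm A S B₁ B)
    (norm_le_mul_norm_saddleForm hC.le hbound) hinj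
    (F₁ ∘L proj₁ (Y := Y) (Z := Z) + F₂ ∘L proj₂ (X := X) (Z := Z) +
      G ∘L proj₃ (X := X) (Y := Y))
  have h := (saddleForm_apply_eq_iff p _).mp hp
  refine ⟨proj₁ p, proj₂ p, proj₃ p, ?_⟩
  convert h using 1 <;> ext <;> simp [proj₁, proj₂, proj₃, inj₁, inj₂, inj₃]

end Hilbert

theorem stmt_6 {X Y Z : Type*}
    [NormedAddCommGroup X] [InnerProductSpace ℝ X] [CompleteSpace X]
    [NormedAddCommGroup Y] [InnerProductSpace ℝ Y] [CompleteSpace Y]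
    [NormedAddCommGroup Z] [InnerProductSpace ℝ Z] [CompleteSpace Z]
    (A : X →L[ℝ] X →L[ℝ] ℝ) (S : Y →L[ℝ] Y →L[ℝ] ℝ)
    (B₁ : X →L[ℝ] Y →L[ℝ] ℝ) (B : X →L[ℝ] Z →L[ℝ] ℝ)
    (α β₁ β : ℝ) (hα : 0 < α) (hβ₁ : 0 < β₁) (hβ : 0 < β)
    -- (i) coercivity of A on the kernel V of B
    (hAcoer : ∀ τ : X, (∀ v : Z, B τ v = 0) → α * ‖τ‖ ^ 2 ≤ A τ τ)
    -- (ii) S positive semidefinite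
    (hS : ∀ ψ : Y, 0 ≤ S ψ ψ)
    -- (iii) inf-sup for B₁ on V × Y
    (hB₁ : ∀ ψ : Y,
      β₁ * ‖ψ‖ ≤ ⨆ τ : {τ : X // (∀ v : Z, B τ v = 0) ∧ τ ≠ 0}, B₁ τ ψ / ‖(τ : X)‖)
    -- (iv) inf-sup for B on X × Z
    (hB : ∀ v : Z, β * ‖v‖ ≤ ⨆ τ : {τ : X // τ ≠ 0}, B τ v / ‖(τ : X)‖) :
    ∃ C > 0, ∀ (F₁ : X →L[ℝ] ℝ) (F₂ : Y →L[ℝ] ℝ) (G : Z →L[ℝ] ℝ),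
      (∃! p : X × Y × Z,
        (∀ τ : X, A p.1 τ + B₁ τ p.2.1 + B τ p.2.2 = F₁ τ) ∧
        (∀ ψ : Y, B₁ p.1 ψ - S p.2.1 ψ = F₂ ψ) ∧
        (∀ v : Z, B p.1 v = G v)) ∧
      (∀ σ : X, ∀ φ : Y, ∀ u : Z,
        ((∀ τ : X, A σ τ + B₁ τ φ + B τ u = F₁ τ) ∧
         (∀ ψ : Y, B₁ σ ψ - S φ ψ = F₂ ψ) ∧
         (∀ v : Z, B σ v = G v)) →
        ‖σ‖ + ‖φ‖ + ‖u‖ ≤ C * (‖F₁‖ + ‖F₂‖ + ‖G‖)) := by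
  obtain ⟨C, hC, hbound⟩ := exists_norm_le_of_isSaddlePointSolution hα hβ₁ hβ hAcoer hS hB₁ hB
  refine ⟨C, hC, fun F₁ F₂ G => ⟨?_, hbound F₁ F₂ G⟩⟩
  obtain ⟨σ, φ, u, h⟩ := exists_isSaddlePointSolution hα hβ₁ hβ hAcoer hS hB₁ hB F₁ F₂ G
  refine ⟨(σ, φ, u), h, fun ⟨σ', φ', u'⟩ h' => ?_⟩
  have hzero := hbound _ _ _ _ _ _ (IsSaddlePointSolution.sub h' h)
  simp only [sub_self, norm_zero, add_zero, mul_zero] at hzero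
  obtain ⟨hσ, hφ, hu⟩ : ‖σ' - σ‖ = 0 ∧ ‖φ' - φ‖ = 0 ∧ ‖u' - u‖ = 0 := by
    refine ⟨?_, ?_, ?_⟩ <;>
      linarith [norm_nonneg (σ' - σ), norm_nonneg (φ' - φ), norm_nonneg (u' - u)]
  simp only [norm_eq_zero, sub_eq_zero] at hσ hφ hu
  rw [hσ, hφ, hu]
end

section
/- Let T be a simplex in ℝⁿ (n = 2 or 3) with vertices r₁,…,r_s (s = n+1) and let Q(φ,ψ) = (|T|/s) Σᵢ φ(rᵢ)·ψ(rᵢ) be the vertex quadrature rule. Then Q is an inner product on the space of vector-valued (or matrix-valued) polynomials of degree ≤ 1 on T, and the induced norm is equivalent to the L²(T) norm with equivalence constants independent of the diameter of T under shape regularity; in particular there exist C₀, C₁ > 0 with C₀‖φ‖²_{L²(T)} ≤ Q(φ,φ) ≤ C₁‖φ‖²_{L²(T)} for all φ linear on T. -/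
open MeasureTheory RealInnerProductSpace BigOperators

/-- Vertex quadrature rule on the simplex with vertices `r`, applied to two
affine (degree ≤ 1 polynomial) fields `φ`, `ψ`. -/
noncomputable def vertexQuad {n : ℕ} {F : Type*}
    [NormedAddCommGroup F] [InnerProductSpace ℝ F]
    (r : Fin (n + 1) → EuclideanSpace ℝ (Fin n))
    (φ ψ : EuclideanSpace ℝ (Fin n) →ᵃ[ℝ] F) : ℝ :=
  ((volume (convexHull ℝ (Set.range r))).toReal / (n + 1)) * ∑ i, ⟪φ (r i), ψ (r i)⟫

open Metric Set Module

/-!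
By the maximum principle for the convex function `‖φ‖`, an affine field is bounded on the simplex
`T` by its values at the vertices; this makes the quadrature form definite and gives
`∫_T ‖φ‖² ≤ |T| ∑ᵢ ‖φ(rᵢ)‖²`.

Conversely, `φ` is controlled on all of `T` by its `L²` mass on the inscribed ball `B(z, ρin)`.
Averaging over pairs of points symmetric about `c` shows that `|B(c, s)| ‖φ c‖² ≤ ∫_{B(c,s)} ‖φ‖²`,
which bounds `φ` on `B(z, ρin / 2)`; an affine map bounded by `M` on a ball of radius `s` is
bounded by `(1 + 2d/s) M` at distance `d` from its centre. Shape regularity bounds both `d / s` and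
`|T| / |B(z, ρin / 2)|` in terms of `ρ` alone, so the constants do not depend on the size of `T`.
-/

section ConvexHull

variable {E F : Type*} [AddCommGroup E] [Module ℝ E] [NormedAddCommGroup F] [NormedSpace ℝ F]

theorem AffineMap.exists_norm_le_of_mem_convexHull (φ : E →ᵃ[ℝ] F) {s : Set E} {x : E}
    (hx : x ∈ convexHull ℝ s) : ∃ y ∈ s, ‖φ x‖ ≤ ‖φ y‖ :=
  (convexOn_univ_norm.comp_affineMap φ).exists_ge_of_mem_convexHull (fun _ _ => trivial) hx

theorem AffineMap.norm_sq_le_sum_of_mem_convexHull {ι : Type*} [Fintype ι] (φ : E →ᵃ[ℝ] F)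
    (r : ι → E) {x : E} (hx : x ∈ convexHull ℝ (range r)) :
    ‖φ x‖ ^ 2 ≤ ∑ i, ‖φ (r i)‖ ^ 2 := by
  obtain ⟨_, ⟨i, rfl⟩, hi⟩ := φ.exists_norm_le_of_mem_convexHull hx
  calc ‖φ x‖ ^ 2 ≤ ‖φ (r i)‖ ^ 2 := by gcongr
    _ ≤ ∑ j, ‖φ (r j)‖ ^ 2 :=
      Finset.single_le_sum (f := fun j => ‖φ (r j)‖ ^ 2) (fun j _ => sq_nonneg _)
        (Finset.mem_univ i)

end ConvexHull

theorem AffineMap.norm_le_of_forall_mem_closedBall {E F : Type*} [NormedAddCommGroup E]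
    [NormedSpace ℝ E] [NormedAddCommGroup F] [NormedSpace ℝ F] (φ : E →ᵃ[ℝ] F) {z : E} {s M : ℝ}
    (hs : 0 < s) (hM : ∀ x ∈ closedBall z s, ‖φ x‖ ≤ M) (y : E) :
    ‖φ y‖ ≤ (1 + 2 * dist y z / s) * M := by
  have hz := hM z (mem_closedBall_self hs.le)
  rcases eq_or_ne y z with rfl | hyz
  · simpa using hz
  have hd : 0 < dist y z := dist_pos.mpr hyz
  set t := dist y z / s
  set w := z + (s / dist y z) • (y - z)
  have hw : w ∈ closedBall z s := by
    rw [mem_closedBall, dist_eq_norm, add_sub_cancel_left, norm_smul, ← dist_eq_norm,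
      Real.norm_of_nonneg (by positivity), div_mul_cancel₀ _ hd.ne']
  have hy : y = AffineMap.lineMap z w t := by
    have ht : t * (s / dist y z) = 1 := by
      rw [div_mul_div_comm, mul_comm, div_self (by positivity)]
    rw [AffineMap.lineMap_apply_module', add_sub_cancel_left, smul_smul, ht, one_smul,
      sub_add_cancel]
  calc ‖φ y‖ = ‖t • (φ w - φ z) + φ z‖ := by
        rw [hy, φ.apply_lineMap, AffineMap.lineMap_apply_module']
    _ ≤ t * (‖φ w‖ + ‖φ z‖) + ‖φ z‖ := by
        grw [norm_add_le, norm_smul, norm_sub_le, Real.norm_of_nonneg (by positivity)]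
    _ ≤ t * (M + M) + M := by grw [hM w hw, hz]
    _ = (1 + 2 * dist y z / s) * M := by ring

theorem AffineIndependent.measure_convexHull_pos {E : Type*} [NormedAddCommGroup E]
    [NormedSpace ℝ E] [FiniteDimensional ℝ E] [MeasurableSpace E] (μ : Measure E)
    [μ.IsAddHaarMeasure] {ι : Type*} [Fintype ι] {r : ι → E}
    (hr : AffineIndependent ℝ r) (hcard : Fintype.card ι = finrank ℝ E + 1) :
    0 < μ (convexHull ℝ (range r)) :=
  μ.measure_pos_of_nonempty_interior <| interior_convexHull_nonempty_iff_affineSpan_eq_top.mpr <|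
    hr.affineSpan_eq_top_iff_card_eq_finrank_add_one.mpr hcard

theorem AffineMap.setIntegral_norm_sq_le_sum {E F ι : Type*} [NormedAddCommGroup E]
    [NormedSpace ℝ E] [MeasurableSpace E] (μ : Measure E) [IsFiniteMeasureOnCompacts μ]
    [NormedAddCommGroup F] [NormedSpace ℝ F] [Fintype ι] (φ : E →ᵃ[ℝ] F) (r : ι → E) :
    ∫ x in convexHull ℝ (range r), ‖φ x‖ ^ 2 ∂μ
      ≤ μ.real (convexHull ℝ (range r)) * ∑ i, ‖φ (r i)‖ ^ 2 := by
  have hT := (finite_range r).isCompact_convexHull (𝕜 := ℝ)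
  calc ∫ x in convexHull ℝ (range r), ‖φ x‖ ^ 2 ∂μ
      ≤ ‖∫ x in convexHull ℝ (range r), ‖φ x‖ ^ 2 ∂μ‖ := Real.le_norm_self _
    _ ≤ (∑ i, ‖φ (r i)‖ ^ 2) * μ.real (convexHull ℝ (range r)) :=
        norm_setIntegral_le_of_norm_le_const hT.measure_lt_top fun x hx => by
          rw [Real.norm_of_nonneg (sq_nonneg _)]
          exact φ.norm_sq_le_sum_of_mem_convexHull r hx
    _ = μ.real (convexHull ℝ (range r)) * ∑ i, ‖φ (r i)‖ ^ 2 := mul_comm _ _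

section Haar

variable {E F : Type*} [NormedAddCommGroup E] [NormedSpace ℝ E] [FiniteDimensional ℝ E]
  [MeasurableSpace E] [BorelSpace E] (μ : Measure E) [μ.IsAddHaarMeasure]
  [NormedAddCommGroup F] [NormedSpace ℝ F]

theorem AffineMap.integrableOn_norm_sq (φ : E →ᵃ[ℝ] F) {K : Set E} (hK : IsCompact K) :
    IntegrableOn (fun x => ‖φ x‖ ^ 2) K μ :=
  (φ.continuous_of_finiteDimensional.norm.pow 2).continuousOn.integrableOn_compact hK

theorem AffineMap.measureReal_ball_mul_norm_sq_le (φ : E →ᵃ[ℝ] F) (c : E) (s : ℝ) :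
    μ.real (ball c s) * ‖φ c‖ ^ 2 ≤ ∫ x in ball c s, ‖φ x‖ ^ 2 ∂μ := by
  -- `x ↦ 2c - x` preserves `μ` and the ball, and `φ c` is the midpoint of `φ x` and `φ (2c - x)`
  have hsymm : (fun x => (c + c) - x) ⁻¹' ball c s = ball c s := by
    ext x
    have : c + c - x - c = -(x - c) := by abel
    simp only [mem_preimage, mem_ball, dist_eq_norm, this, norm_neg]
  have hσ := μ.measurePreserving_sub_left (c + c)
  have hint := φ.integrableOn_norm_sq μ (isCompact_closedBall c s) |>.mono_set
    ball_subset_closedBall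
  have hint' : IntegrableOn (fun x => ‖φ ((c + c) - x)‖ ^ 2) (ball c s) μ := by
    rw [← hsymm]
    exact (hσ.integrableOn_comp_preimage (measurableEmbedding_subLeft _)).mpr hint
  have hrefl : ∫ x in ball c s, ‖φ ((c + c) - x)‖ ^ 2 ∂μ = ∫ x in ball c s, ‖φ x‖ ^ 2 ∂μ := by
    conv_lhs => rw [← hsymm]
    exact hσ.setIntegral_preimage_emb (measurableEmbedding_subLeft _) (fun x => ‖φ x‖ ^ 2) _
  have hmid : ∀ x, ‖φ c‖ ^ 2 ≤ (‖φ x‖ ^ 2 + ‖φ ((c + c) - x)‖ ^ 2) / 2 := by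
    intro x
    have hc : φ c = midpoint ℝ (φ x) (φ ((c + c) - x)) := by
      rw [← φ.map_midpoint, midpoint_eq_smul_add, add_sub_cancel, ← two_smul ℝ c, smul_smul]
      norm_num
    have hle : ‖φ c‖ ≤ (‖φ x‖ + ‖φ ((c + c) - x)‖) / 2 := by
      rw [hc, midpoint_eq_smul_add, norm_smul, invOf_eq_inv,
        Real.norm_of_nonneg (by norm_num), inv_mul_eq_div]
      gcongr
      exact norm_add_le (φ x) (φ ((c + c) - x))
    nlinarith [sq_nonneg (‖φ x‖ - ‖φ ((c + c) - x)‖), norm_nonneg (φ c)]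
  calc μ.real (ball c s) * ‖φ c‖ ^ 2 = ∫ _ in ball c s, ‖φ c‖ ^ 2 ∂μ := by
        rw [setIntegral_const, smul_eq_mul]
    _ ≤ ∫ x in ball c s, (‖φ x‖ ^ 2 + ‖φ ((c + c) - x)‖ ^ 2) / 2 ∂μ :=
        setIntegral_mono_on (integrableOn_const measure_ball_lt_top.ne)
          (by exact (hint.add hint').div_const 2) measurableSet_ball fun x _ => hmid x
    _ = ∫ x in ball c s, ‖φ x‖ ^ 2 ∂μ := by
        rw [integral_div, integral_add hint hint', hrefl, add_self_div_two]

theorem AffineMap.measureReal_ball_mul_norm_sq_le_of_mem_closedBall (φ : E →ᵃ[ℝ] F) {z y : E}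
    {s : ℝ} (hy : y ∈ closedBall z s) :
    μ.real (ball z s) * ‖φ y‖ ^ 2 ≤ ∫ x in ball z (2 * s), ‖φ x‖ ^ 2 ∂μ := by
  have hsub : ball y s ⊆ ball z (2 * s) :=
    ball_subset_ball' (by rw [mem_closedBall] at hy; linarith)
  calc μ.real (ball z s) * ‖φ y‖ ^ 2 = μ.real (ball y s) * ‖φ y‖ ^ 2 := by
        rw [Measure.addHaar_real_ball_center μ z, Measure.addHaar_real_ball_center μ y]
    _ ≤ ∫ x in ball y s, ‖φ x‖ ^ 2 ∂μ := φ.measureReal_ball_mul_norm_sq_le μ y s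
    _ ≤ ∫ x in ball z (2 * s), ‖φ x‖ ^ 2 ∂μ :=
        setIntegral_mono_set
          ((φ.integrableOn_norm_sq μ (isCompact_closedBall z _)).mono_set ball_subset_closedBall)
          (.of_forall fun _ => sq_nonneg _) hsub.eventuallyLE

theorem AffineMap.measureReal_ball_mul_norm_sq_le_mul_setIntegral (φ : E →ᵃ[ℝ] F) {z : E} {s : ℝ}
    (hs : 0 < s) (y : E) :
    μ.real (ball z s) * ‖φ y‖ ^ 2
      ≤ (1 + 2 * dist y z / s) ^ 2 * ∫ x in ball z (2 * s), ‖φ x‖ ^ 2 ∂μ := by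
  set V := μ.real (ball z s)
  set I := ∫ x in ball z (2 * s), ‖φ x‖ ^ 2 ∂μ
  have hV : 0 < V := ENNReal.toReal_pos (measure_ball_pos μ z hs).ne' measure_ball_lt_top.ne
  have hM : ∀ x ∈ closedBall z s, ‖φ x‖ ≤ √(I / V) := fun x hx =>
    Real.le_sqrt_of_sq_le <| (le_div_iff₀ hV).mpr <| by
      rw [mul_comm]; exact φ.measureReal_ball_mul_norm_sq_le_of_mem_closedBall μ hx
  calc V * ‖φ y‖ ^ 2 ≤ V * ((1 + 2 * dist y z / s) * √(I / V)) ^ 2 := by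
        grw [φ.norm_le_of_forall_mem_closedBall hs hM y]
    _ = (1 + 2 * dist y z / s) ^ 2 * I := by
        rw [mul_pow, Real.sq_sqrt (by positivity)]
        field_simp

theorem AffineMap.measureReal_mul_norm_sq_le_setIntegral (φ : E →ᵃ[ℝ] F) {K : Set E}
    (hK : IsCompact K) {z : E} {ρ ρin : ℝ} (hρin : 0 < ρin) (hball : ball z ρin ⊆ K)
    (hdiam : diam K ≤ ρ * ρin) {y : E} (hy : y ∈ K) :
    μ.real K * ‖φ y‖ ^ 2 ≤ (2 * ρ) ^ finrank ℝ E * (1 + 4 * ρ) ^ 2 * ∫ x in K, ‖φ x‖ ^ 2 ∂μ := by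
  have hz : z ∈ K := hball (mem_ball_self hρin)
  have hρ : 0 ≤ ρ := nonneg_of_mul_nonneg_left (diam_nonneg.trans hdiam) hρin
  have hdist : ∀ x ∈ K, dist x z ≤ ρ * ρin := fun x hx =>
    (dist_le_diam_of_mem hK.isBounded hx hz).trans hdiam
  have hball_vol : ∀ t, 0 < t → μ.real (ball z t) = t ^ finrank ℝ E * μ.real (ball (0 : E) 1) := by
    intro t ht
    rw [measureReal_def, Measure.addHaar_ball_of_pos μ z ht, ENNReal.toReal_mul,
      ENNReal.toReal_ofReal (by positivity), measureReal_def]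
  have hvol : μ.real K ≤ (2 * ρ) ^ finrank ℝ E * μ.real (ball z (ρin / 2)) := by
    calc μ.real K ≤ μ.real (closedBall z (ρ * ρin)) :=
          measureReal_mono (fun x hx => mem_closedBall.mpr (hdist x hx))
            measure_closedBall_lt_top.ne
      _ = (2 * ρ) ^ finrank ℝ E * μ.real (ball z (ρin / 2)) := by
          rw [Measure.addHaar_real_closedBall μ z (by positivity), hball_vol _ (by positivity),
            ← mul_assoc, ← mul_pow]
          ring_nf
  have hvertex : μ.real (ball z (ρin / 2)) * ‖φ y‖ ^ 2
      ≤ (1 + 4 * ρ) ^ 2 * ∫ x in ball z ρin, ‖φ x‖ ^ 2 ∂μ := by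
    have h := φ.measureReal_ball_mul_norm_sq_le_mul_setIntegral μ (z := z) (half_pos hρin) y
    rw [mul_div_cancel₀ _ two_ne_zero] at h
    refine h.trans (mul_le_mul_of_nonneg_right ?_ ?_)
    · have : 2 * dist y z / (ρin / 2) ≤ 4 * ρ := by
        rw [div_le_iff₀ (by positivity)]
        linarith [hdist y hy]
      gcongr
    · exact setIntegral_nonneg measurableSet_ball fun _ _ => sq_nonneg _
  have hmono : ∫ x in ball z ρin, ‖φ x‖ ^ 2 ∂μ ≤ ∫ x in K, ‖φ x‖ ^ 2 ∂μ :=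
    setIntegral_mono_set (φ.integrableOn_norm_sq μ hK) (.of_forall fun _ => sq_nonneg _)
      hball.eventuallyLE
  calc μ.real K * ‖φ y‖ ^ 2 ≤ (2 * ρ) ^ finrank ℝ E * μ.real (ball z (ρin / 2)) * ‖φ y‖ ^ 2 := by
        gcongr
    _ ≤ (2 * ρ) ^ finrank ℝ E * ((1 + 4 * ρ) ^ 2 * ∫ x in ball z ρin, ‖φ x‖ ^ 2 ∂μ) := by
        rw [mul_assoc]; gcongr
    _ ≤ (2 * ρ) ^ finrank ℝ E * (1 + 4 * ρ) ^ 2 * ∫ x in K, ‖φ x‖ ^ 2 ∂μ := by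
        rw [mul_assoc]; gcongr

end Haar

section VertexQuad

variable {n : ℕ} {F : Type*} [NormedAddCommGroup F] [InnerProductSpace ℝ F]
  (r : Fin (n + 1) → EuclideanSpace ℝ (Fin n))

theorem vertexQuad_comm (φ ψ : EuclideanSpace ℝ (Fin n) →ᵃ[ℝ] F) :
    vertexQuad r φ ψ = vertexQuad r ψ φ := by
  simp only [vertexQuad, real_inner_comm]

theorem vertexQuad_add_left (φ φ' ψ : EuclideanSpace ℝ (Fin n) →ᵃ[ℝ] F) :
    vertexQuad r (φ + φ') ψ = vertexQuad r φ ψ + vertexQuad r φ' ψ := by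
  simp only [vertexQuad, AffineMap.coe_add, Pi.add_apply, inner_add_left, Finset.sum_add_distrib,
    mul_add]

theorem vertexQuad_smul_left (c : ℝ) (φ ψ : EuclideanSpace ℝ (Fin n) →ᵃ[ℝ] F) :
    vertexQuad r (c • φ) ψ = c * vertexQuad r φ ψ := by
  simp only [vertexQuad, AffineMap.coe_smul, Pi.smul_apply, real_inner_smul_left,
    ← Finset.mul_sum]
  ring

theorem vertexQuad_self (φ : EuclideanSpace ℝ (Fin n) →ᵃ[ℝ] F) :
    vertexQuad r φ φ
      = volume.real (convexHull ℝ (range r)) / (n + 1) * ∑ i, ‖φ (r i)‖ ^ 2 := by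
  simp only [vertexQuad, real_inner_self_eq_norm_sq, measureReal_def]

theorem vertexQuad_self_nonneg (φ : EuclideanSpace ℝ (Fin n) →ᵃ[ℝ] F) :
    0 ≤ vertexQuad r φ φ := by
  rw [vertexQuad_self]
  positivity

theorem eq_zero_of_vertexQuad_self_eq_zero {r : Fin (n + 1) → EuclideanSpace ℝ (Fin n)}
    (hr : AffineIndependent ℝ r) {φ : EuclideanSpace ℝ (Fin n) →ᵃ[ℝ] F}
    (h : vertexQuad r φ φ = 0) {x : EuclideanSpace ℝ (Fin n)}
    (hx : x ∈ convexHull ℝ (range r)) : φ x = 0 := by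
  have hT : 0 < volume.real (convexHull ℝ (range r)) :=
    ENNReal.toReal_pos (hr.measure_convexHull_pos volume (by simp)).ne'
      ((finite_range r).isCompact_convexHull (𝕜 := ℝ)).measure_lt_top.ne
  have hsum : ∑ i, ‖φ (r i)‖ ^ 2 = 0 := by
    rw [vertexQuad_self] at h
    exact (mul_eq_zero.mp h).resolve_left (by positivity)
  simpa [hsum] using φ.norm_sq_le_sum_of_mem_convexHull r hx

theorem setIntegral_norm_sq_le_vertexQuad (φ : EuclideanSpace ℝ (Fin n) →ᵃ[ℝ] F) :
    1 / (n + 1 : ℝ) * ∫ x in convexHull ℝ (range r), ‖φ x‖ ^ 2 ≤ vertexQuad r φ φ := by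
  rw [vertexQuad_self, one_div_mul_eq_div, div_mul_eq_mul_div]
  gcongr
  exact φ.setIntegral_norm_sq_le_sum volume r

theorem vertexQuad_le_setIntegral_norm_sq {z : EuclideanSpace ℝ (Fin n)} {ρ ρin : ℝ}
    (hρin : 0 < ρin) (hball : ball z ρin ⊆ convexHull ℝ (range r))
    (hdiam : diam (convexHull ℝ (range r)) ≤ ρ * ρin) (φ : EuclideanSpace ℝ (Fin n) →ᵃ[ℝ] F) :
    vertexQuad r φ φ
      ≤ (2 * ρ) ^ n * (1 + 4 * ρ) ^ 2 * ∫ x in convexHull ℝ (range r), ‖φ x‖ ^ 2 := by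
  have hT := (finite_range r).isCompact_convexHull (𝕜 := ℝ)
  rw [vertexQuad_self, div_mul_eq_mul_div, Finset.mul_sum, div_le_iff₀ (by positivity)]
  calc ∑ i, volume.real (convexHull ℝ (range r)) * ‖φ (r i)‖ ^ 2
      ≤ ∑ _i : Fin (n + 1), (2 * ρ) ^ n * (1 + 4 * ρ) ^ 2 *
          ∫ x in convexHull ℝ (range r), ‖φ x‖ ^ 2 :=
        Finset.sum_le_sum fun i _ => by
          simpa [finrank_euclideanSpace_fin] using φ.measureReal_mul_norm_sq_le_setIntegral
            volume hT hρin hball hdiam (subset_convexHull ℝ _ (mem_range_self i))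
    _ = _ := by
        simp only [Finset.sum_const, Finset.card_univ, Fintype.card_fin, nsmul_eq_mul]
        push_cast
        ring

end VertexQuad

theorem stmt_16_general (n : ℕ)
    {F : Type*} [NormedAddCommGroup F] [InnerProductSpace ℝ F] :
    -- the vertex quadrature rule is an inner product on affine fields
    (∀ r : Fin (n + 1) → EuclideanSpace ℝ (Fin n), AffineIndependent ℝ r →
      (∀ φ ψ : EuclideanSpace ℝ (Fin n) →ᵃ[ℝ] F, vertexQuad r φ ψ = vertexQuad r ψ φ) ∧
      (∀ φ φ' ψ : EuclideanSpace ℝ (Fin n) →ᵃ[ℝ] F,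
        vertexQuad r (φ + φ') ψ = vertexQuad r φ ψ + vertexQuad r φ' ψ) ∧
      (∀ (c : ℝ) (φ ψ : EuclideanSpace ℝ (Fin n) →ᵃ[ℝ] F),
        vertexQuad r (c • φ) ψ = c * vertexQuad r φ ψ) ∧
      (∀ φ : EuclideanSpace ℝ (Fin n) →ᵃ[ℝ] F, 0 ≤ vertexQuad r φ φ) ∧
      (∀ φ : EuclideanSpace ℝ (Fin n) →ᵃ[ℝ] F, vertexQuad r φ φ = 0 →
        ∀ x ∈ convexHull ℝ (Set.range r), φ x = 0)) ∧
    -- norm equivalence, uniform over shape-regular simplices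
    (∀ ρ : ℝ, 0 < ρ → ∃ C₀ > (0:ℝ), ∃ C₁ > (0:ℝ),
      ∀ r : Fin (n + 1) → EuclideanSpace ℝ (Fin n), AffineIndependent ℝ r →
        ∀ (z : EuclideanSpace ℝ (Fin n)) (ρin : ℝ), 0 < ρin →
          Metric.ball z ρin ⊆ convexHull ℝ (Set.range r) →
          Metric.diam (convexHull ℝ (Set.range r)) ≤ ρ * ρin →
          ∀ φ : EuclideanSpace ℝ (Fin n) →ᵃ[ℝ] F,
            C₀ * (∫ x in convexHull ℝ (Set.range r), ‖φ x‖ ^ 2) ≤ vertexQuad r φ φ ∧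
            vertexQuad r φ φ ≤ C₁ * ∫ x in convexHull ℝ (Set.range r), ‖φ x‖ ^ 2) := by
  refine ⟨fun r hr => ⟨vertexQuad_comm r, vertexQuad_add_left r, vertexQuad_smul_left r,
    vertexQuad_self_nonneg r, fun φ h x hx => eq_zero_of_vertexQuad_self_eq_zero hr h hx⟩,
    fun ρ hρ => ⟨1 / (n + 1), by positivity, (2 * ρ) ^ n * (1 + 4 * ρ) ^ 2, by positivity,
      fun r _ z ρin hρin hball hdiam φ => ⟨setIntegral_norm_sq_le_vertexQuad r φ,
        vertexQuad_le_setIntegral_norm_sq r hρin hball hdiam φ⟩⟩⟩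

theorem stmt_16 (n : ℕ) (hn : n = 2 ∨ n = 3)
    {F : Type*} [NormedAddCommGroup F] [InnerProductSpace ℝ F] :
    -- the vertex quadrature rule is an inner product on affine fields
    (∀ r : Fin (n + 1) → EuclideanSpace ℝ (Fin n), AffineIndependent ℝ r →
      (∀ φ ψ : EuclideanSpace ℝ (Fin n) →ᵃ[ℝ] F, vertexQuad r φ ψ = vertexQuad r ψ φ) ∧
      (∀ φ φ' ψ : EuclideanSpace ℝ (Fin n) →ᵃ[ℝ] F,
        vertexQuad r (φ + φ') ψ = vertexQuad r φ ψ + vertexQuad r φ' ψ) ∧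
      (∀ (c : ℝ) (φ ψ : EuclideanSpace ℝ (Fin n) →ᵃ[ℝ] F),
        vertexQuad r (c • φ) ψ = c * vertexQuad r φ ψ) ∧
      (∀ φ : EuclideanSpace ℝ (Fin n) →ᵃ[ℝ] F, 0 ≤ vertexQuad r φ φ) ∧
      (∀ φ : EuclideanSpace ℝ (Fin n) →ᵃ[ℝ] F, vertexQuad r φ φ = 0 →
        ∀ x ∈ convexHull ℝ (Set.range r), φ x = 0)) ∧
    -- norm equivalence, uniform over shape-regular simplices
    (∀ ρ : ℝ, 0 < ρ → ∃ C₀ > (0:ℝ), ∃ C₁ > (0:ℝ),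
      ∀ r : Fin (n + 1) → EuclideanSpace ℝ (Fin n), AffineIndependent ℝ r →
        ∀ (z : EuclideanSpace ℝ (Fin n)) (ρin : ℝ), 0 < ρin →
          Metric.ball z ρin ⊆ convexHull ℝ (Set.range r) →
          Metric.diam (convexHull ℝ (Set.range r)) ≤ ρ * ρin →
          ∀ φ : EuclideanSpace ℝ (Fin n) →ᵃ[ℝ] F,
            C₀ * (∫ x in convexHull ℝ (Set.range r), ‖φ x‖ ^ 2) ≤ vertexQuad r φ φ ∧
            vertexQuad r φ φ ≤ C₁ * ∫ x in convexHull ℝ (Set.range r), ‖φ x‖ ^ 2) :=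
  stmt_16_general n
end

section
/- Let L be a measurable symmetric matrix-valued coefficient that is uniformly bounded and uniformly positive definite: l₀|ξ|² ≤ (L(x)ξ)·ξ ≤ l₁|ξ|² for all ξ and a.e. x, with 0 < l₀ ≤ l₁. Let Q be the elementwise vertex quadrature rule on a shape-regular simplicial mesh applied to (Lφ, ψ). Then there exist constants C₀, C₁ > 0 independent of the mesh size h such that (Lφ,φ)_Q ≥ C₀‖φ‖²_{L²} and (Lφ,ψ)_Q ≤ C₁‖φ‖_{L²}‖ψ‖_{L²} for all elementwise-linear φ, ψ. Hence (Lφ,φ)_Q^{1/2} defines a norm on elementwise-linear functions equivalent to the L² norm. -/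
/-!
Coercivity: `v ↦ v ⬝ᵥ v` is convex, so on a simplex `T` the square of an affine field is bounded
by the sum of its vertex values, whence `∫_T |φ|² ≤ |T| ∑ᵢ |φ(rᵢ)|²`; the lower bound on `L` then
gives `C₀ = l₀ / (n + 1)`.

Continuity: `(·, ·)_Q` is a positive semidefinite symmetric bilinear form in the vertex values, so
it satisfies Cauchy–Schwarz, and `(Lφ, φ)_Q ≤ l₁ / (n + 1) ∑_T |T| ∑ᵢ |φ(rᵢ)|²`. The inverse
estimate `|T| ∑ᵢ |φ(rᵢ)|² ≤ c ∫_T |φ|²` holds with `c` independent of `T`: the affine map carrying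
a fixed reference simplex onto `T` multiplies both sides by the same Jacobian, and on the reference
simplex the two sides are positive definite quadratic forms in the vertex values, hence comparable
by compactness of the unit sphere.
-/

open Matrix MeasureTheory Set

namespace AffineBasis

section Interpolation

variable {ι E F : Type*} [Fintype ι] [AddCommGroup E] [Module ℝ E] [AddCommGroup F] [Module ℝ F]

noncomputable def interp (b : AffineBasis ι ℝ E) (v : ι → F) : E →ᵃ[ℝ] F :=
  (Fintype.linearCombination ℝ v).toAffineMap.comp b.coords

theorem interp_apply (b : AffineBasis ι ℝ E) (v : ι → F) (x : E) :
    b.interp v x = ∑ i, b.coord i x • v i := rfl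

theorem interp_apply_self (b : AffineBasis ι ℝ E) (v : ι → F) (j : ι) :
    b.interp v (b j) = v j := by
  classical
  simp [interp_apply, coord_apply]

theorem interp_smul (b : AffineBasis ι ℝ E) (c : ℝ) (v : ι → F) (x : E) :
    b.interp (c • v) x = c • b.interp v x := by
  simp [interp_apply, Finset.smul_sum, smul_comm c]

theorem interp_comp_self (b : AffineBasis ι ℝ E) (g : E →ᵃ[ℝ] F) :
    b.interp (fun i => g (b i)) = g :=
  AffineMap.ext_on b.tot (by rintro - ⟨j, rfl⟩; exact b.interp_apply_self _ j)

theorem interp_injective (b₀ b : AffineBasis ι ℝ E) : Function.Injective (b₀.interp b) := by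
  have h : (b.interp b₀).comp (b₀.interp b) = AffineMap.id ℝ E :=
    AffineMap.ext_on b₀.tot (by
      rintro - ⟨j, rfl⟩
      simp [interp_apply_self])
  exact Function.LeftInverse.injective (g := b.interp b₀) fun x => by
    simpa using congrArg (· x) h

end Interpolation

end AffineBasis

theorem AffineMap.setIntegral_image {E G : Type*} [NormedAddCommGroup E] [NormedSpace ℝ E]
    [FiniteDimensional ℝ E] [MeasurableSpace E] [BorelSpace E] [NormedAddCommGroup G]
    [NormedSpace ℝ G] (μ : Measure E) [μ.IsAddHaarMeasure] (A : E →ᵃ[ℝ] E)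
    (hA : Function.Injective A) {s : Set E} (hs : MeasurableSet s) (g : E → G) :
    ∫ x in A '' s, g x ∂μ = |LinearMap.det A.linear| • ∫ x in s, g (A x) ∂μ := by
  have hderiv : ∀ x, HasFDerivAt A (LinearMap.toContinuousLinearMap A.linear) x := fun x => by
    convert ((LinearMap.toContinuousLinearMap A.linear).hasFDerivAt (x := x)).add_const (A 0)
    exact congrFun A.decomp _
  rw [integral_image_eq_integral_abs_det_fderiv_smul μ hs (fun x _ => (hderiv x).hasFDerivWithinAt)
    hA.injOn, integral_smul, ContinuousLinearMap.det, LinearMap.coe_toContinuousLinearMap]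

theorem exists_le_mul_of_homogeneous {V : Type*} [NormedAddCommGroup V] [NormedSpace ℝ V]
    [FiniteDimensional ℝ V] {f g : V → ℝ} (hf : Continuous f) (hg : Continuous g)
    (hf_pos : ∀ v, v ≠ 0 → 0 < f v) (hf_smul : ∀ (c : ℝ) v, f (c • v) = c ^ 2 * f v)
    (hg_smul : ∀ (c : ℝ) v, g (c • v) = c ^ 2 * g v) :
    ∃ C > 0, ∀ v, g v ≤ C * f v := by
  have hf0 : f 0 = 0 := by simpa using hf_smul 0 0
  have hg0 : g 0 = 0 := by simpa using hg_smul 0 0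
  rcases subsingleton_or_nontrivial V with hV | hV
  · exact ⟨1, one_pos, fun v => by simp [Subsingleton.elim v 0, hf0, hg0]⟩
  have hS := isCompact_sphere (0 : V) 1
  have hSne : (Metric.sphere (0 : V) 1).Nonempty := NormedSpace.sphere_nonempty.mpr zero_le_one
  obtain ⟨u₀, hu₀, hmin⟩ := hS.exists_isMinOn hSne hf.continuousOn
  obtain ⟨M, hM⟩ := hS.bddAbove_image hg.continuousOn
  have hm : 0 < f u₀ := hf_pos u₀ (ne_zero_of_mem_unit_sphere ⟨u₀, hu₀⟩)
  refine ⟨max M 1 / f u₀, by positivity, fun v => ?_⟩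
  rcases eq_or_ne v 0 with rfl | hv
  · simp [hf0, hg0]
  set u := ‖v‖⁻¹ • v
  have hu : u ∈ Metric.sphere (0 : V) 1 := by
    simp [u, norm_smul, hv]
  have hvu : v = ‖v‖ • u := by simp [u, smul_smul, hv]
  rw [hvu, hf_smul, hg_smul]
  calc ‖v‖ ^ 2 * g u ≤ ‖v‖ ^ 2 * max M 1 := by
        gcongr; exact (hM ⟨u, hu, rfl⟩).trans (le_max_left _ _)
    _ = max M 1 / f u₀ * (‖v‖ ^ 2 * f u₀) := by field_simp
    _ ≤ max M 1 / f u₀ * (‖v‖ ^ 2 * f u) := by gcongr; exact hmin hu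

theorem dotProduct_self_nonneg {κ R : Type*} [Fintype κ] [Ring R] [LinearOrder R]
    [IsStrictOrderedRing R] (v : κ → R) : 0 ≤ v ⬝ᵥ v :=
  Finset.sum_nonneg fun i _ => mul_self_nonneg (v i)

namespace AffineBasis

variable {ι E : Type*} [Fintype ι] [NormedAddCommGroup E] [NormedSpace ℝ E]
  [FiniteDimensional ℝ E] [MeasurableSpace E] (μ : Measure E) [μ.IsAddHaarMeasure]

theorem measureReal_convexHull_pos (b : AffineBasis ι ℝ E) :
    0 < μ.real (convexHull ℝ (range b)) := by
  have hint : (interior (convexHull ℝ (range b))).Nonempty :=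
    interior_convexHull_nonempty_iff_affineSpan_eq_top.mpr b.tot
  refine ENNReal.toReal_pos ?_
    ((finite_range b).isCompact_convexHull (𝕜 := ℝ)).measure_lt_top.ne
  exact fun h => (isOpen_interior.measure_pos μ hint).ne' (measure_mono_null interior_subset h)

variable [BorelSpace E]

theorem setIntegral_interp_dotProduct_self_pos (b : AffineBasis ι ℝ E) {m : ℕ}
    {v : ι → Fin m → ℝ} (hv : v ≠ 0) :
    0 < ∫ x in convexHull ℝ (range b), b.interp v x ⬝ᵥ b.interp v x ∂μ := by
  have hcont : Continuous fun x => b.interp v x ⬝ᵥ b.interp v x :=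
    (b.interp v).continuous_of_finiteDimensional.dotProduct
      (b.interp v).continuous_of_finiteDimensional
  have hK : IsCompact (convexHull ℝ (range b)) := (finite_range b).isCompact_convexHull (𝕜 := ℝ)
  have hint : (interior (convexHull ℝ (range b))).Nonempty :=
    interior_convexHull_nonempty_iff_affineSpan_eq_top.mpr b.tot
  obtain ⟨x, hx, hvx⟩ : ∃ x ∈ interior (convexHull ℝ (range b)), b.interp v x ≠ 0 := by
    by_contra! h
    have hzero : b.interp v = 0 :=
      AffineMap.ext_on (isOpen_interior.affineSpan_eq_top hint) fun x hx => h x hx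
    exact hv (funext fun j => by rw [← b.interp_apply_self v j, hzero]; rfl)
  rw [setIntegral_pos_iff_support_of_nonneg_ae
    (Filter.Eventually.of_forall fun x => dotProduct_self_nonneg _)
    (hcont.continuousOn.integrableOn_compact hK)]
  refine lt_of_lt_of_le ?_ (measure_mono (inter_subset_inter_right _ interior_subset))
  exact (hcont.isOpen_support.inter isOpen_interior).measure_pos μ
    ⟨x, dotProduct_self_eq_zero.not.mpr hvx, hx⟩

theorem exists_sum_le_mul_setIntegral_interp (b : AffineBasis ι ℝ E) (m : ℕ) :
    ∃ C > 0, ∀ v : ι → Fin m → ℝ, ∑ i, v i ⬝ᵥ v i ≤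
      C * ∫ x in convexHull ℝ (range b), b.interp v x ⬝ᵥ b.interp v x ∂μ := by
  have hcoord : ∀ i, Continuous (b.coord i) := fun i => (b.coord i).continuous_of_finiteDimensional
  refine exists_le_mul_of_homogeneous ?_ (by fun_prop)
    (fun v hv => b.setIntegral_interp_dotProduct_self_pos μ hv) ?_ ?_
  · refine continuous_parametric_integral_of_continuous ?_
      ((finite_range b).isCompact_convexHull (𝕜 := ℝ))
    simp only [Function.uncurry_def, interp_apply]
    fun_prop
  · intro c v
    simp_rw [interp_smul, smul_dotProduct, dotProduct_smul, smul_eq_mul, ← mul_assoc, ← sq]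
    exact integral_const_mul _ _
  · intro c v
    simp_rw [Pi.smul_apply, smul_dotProduct, dotProduct_smul, smul_eq_mul, ← mul_assoc, ← sq]
    exact (Finset.mul_sum _ _ _).symm

end AffineBasis

open AffineBasis in
theorem exists_measureReal_mul_sum_vertex_le_setIntegral {E : Type*} [NormedAddCommGroup E]
    [NormedSpace ℝ E] [FiniteDimensional ℝ E] [MeasurableSpace E] [BorelSpace E] (μ : Measure E)
    [μ.IsAddHaarMeasure] (ι : Type*) [Fintype ι] (m : ℕ) :
    ∃ C > 0, ∀ (b : AffineBasis ι ℝ E) (φ : E →ᵃ[ℝ] (Fin m → ℝ)),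
      μ.real (convexHull ℝ (range b)) * ∑ i, φ (b i) ⬝ᵥ φ (b i) ≤
        C * ∫ x in convexHull ℝ (range b), φ x ⬝ᵥ φ x ∂μ := by
  rcases isEmpty_or_nonempty (AffineBasis ι ℝ E) with hempty | ⟨⟨b₀⟩⟩
  · exact ⟨1, one_pos, fun b => (IsEmpty.false b).elim⟩
  obtain ⟨C, hC, hle⟩ := b₀.exists_sum_le_mul_setIntegral_interp μ m
  have hK := b₀.measureReal_convexHull_pos μ
  refine ⟨μ.real (convexHull ℝ (range b₀)) * C, by positivity, fun b φ => ?_⟩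
  set A := b₀.interp b
  have himage : A '' convexHull ℝ (range b₀) = convexHull ℝ (range b) := by
    rw [AffineMap.image_convexHull, ← range_comp]
    exact congrArg _ (congrArg range (funext (b₀.interp_apply_self b)))
  have hφA : ∀ x, φ (A x) = b₀.interp (fun i => φ (b i)) x := by
    have h := b₀.interp_comp_self (φ.comp A)
    simp only [AffineMap.coe_comp, Function.comp_apply, A, interp_apply_self] at h
    exact fun x => congrArg (· x) h.symm
  have hmeas : MeasurableSet (convexHull ℝ (range b₀)) :=
    ((finite_range b₀).isCompact_convexHull (𝕜 := ℝ)).isClosed.measurableSet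
  have hcov := A.setIntegral_image μ (b₀.interp_injective b) hmeas (G := ℝ)
  have hvol : μ.real (convexHull ℝ (range b)) =
      |LinearMap.det A.linear| * μ.real (convexHull ℝ (range b₀)) := by
    simpa [← himage] using hcov fun _ => (1 : ℝ)
  rw [hvol, ← himage, hcov]
  simp_rw [hφA, smul_eq_mul]
  exact (mul_le_mul_of_nonneg_left (hle _) (by positivity)).trans_eq (by ring)

theorem convexOn_dotProduct_self (κ : Type*) [Fintype κ] :
    ConvexOn ℝ univ fun v : κ → ℝ => v ⬝ᵥ v := by
  refine ⟨convex_univ, fun x _ y _ a b ha hb hab => ?_⟩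
  simp only [dotProduct, Pi.add_apply, Pi.smul_apply, smul_eq_mul, Finset.mul_sum,
    ← Finset.sum_add_distrib]
  gcongr with i
  nlinarith [sq_nonneg (x i - y i), mul_nonneg ha hb]

theorem setIntegral_dotProduct_self_le {E ι : Type*} [NormedAddCommGroup E] [NormedSpace ℝ E]
    [FiniteDimensional ℝ E] [MeasurableSpace E] [BorelSpace E] (μ : Measure E)
    [IsFiniteMeasureOnCompacts μ] [Fintype ι] {m : ℕ} (r : ι → E) (φ : E →ᵃ[ℝ] (Fin m → ℝ)) :
    ∫ x in convexHull ℝ (range r), φ x ⬝ᵥ φ x ∂μ ≤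
      μ.real (convexHull ℝ (range r)) * ∑ i, φ (r i) ⬝ᵥ φ (r i) := by
  have hK : IsCompact (convexHull ℝ (range r)) := (finite_range r).isCompact_convexHull (𝕜 := ℝ)
  have hφ : Continuous φ := φ.continuous_of_finiteDimensional
  have hpointwise : ∀ x ∈ convexHull ℝ (range r), φ x ⬝ᵥ φ x ≤ ∑ i, φ (r i) ⬝ᵥ φ (r i) := by
    intro x hx
    have hmem : φ x ∈ convexHull ℝ (φ '' range r) := by
      rw [← AffineMap.image_convexHull]; exact mem_image_of_mem _ hx
    obtain ⟨-, ⟨-, ⟨i, rfl⟩, rfl⟩, hle⟩ :=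
      (convexOn_dotProduct_self (Fin m)).exists_ge_of_mem_convexHull (subset_univ _) hmem
    exact hle.trans (Finset.single_le_sum (fun j _ => dotProduct_self_nonneg (φ (r j)))
      (Finset.mem_univ i))
  calc ∫ x in convexHull ℝ (range r), φ x ⬝ᵥ φ x ∂μ
      ≤ ∫ _ in convexHull ℝ (range r), ∑ i, φ (r i) ⬝ᵥ φ (r i) ∂μ :=
        setIntegral_mono_on ((hφ.dotProduct hφ).continuousOn.integrableOn_compact hK)
          (integrableOn_const hK.measure_lt_top.ne) hK.isClosed.measurableSet hpointwise
    _ = _ := by rw [setIntegral_const, smul_eq_mul]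

theorem Matrix.IsSymm.mulVec_dotProduct_comm {κ R : Type*} [Fintype κ] [CommSemiring R]
    {M : Matrix κ κ R} (hM : M.IsSymm) (u w : κ → R) : (M *ᵥ u) ⬝ᵥ w = (M *ᵥ w) ⬝ᵥ u := by
  rw [dotProduct_comm, dotProduct_mulVec, ← mulVec_transpose, hM]

section Quadrature

variable {ι κ : Type*} [Fintype ι] [Fintype κ] {m : ℕ}

-- `(Lu, w)_Q` on vertex values `u T i = φ_T (r_T i)`, with weights `a T = |T| / (n + 1)`.
noncomputable def quadratureForm (a : ι → ℝ) (M : ι → κ → Matrix (Fin m) (Fin m) ℝ) :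
    LinearMap.BilinForm ℝ (ι → κ → Fin m → ℝ) :=
  LinearMap.mk₂ ℝ (fun u w => ∑ T, a T * ∑ i, (M T i *ᵥ u T i) ⬝ᵥ w T i)
    (fun u u' w => by
      simp only [Pi.add_apply, mulVec_add, add_dotProduct, Finset.sum_add_distrib, mul_add])
    (fun c u w => by
      simp only [Pi.smul_apply, mulVec_smul, smul_dotProduct, smul_eq_mul, Finset.mul_sum]
      exact Finset.sum_congr rfl fun _ _ => Finset.sum_congr rfl fun _ _ => mul_left_comm _ _ _)
    (fun u w w' => by
      simp only [Pi.add_apply, dotProduct_add, Finset.sum_add_distrib, mul_add])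
    (fun c u w => by
      simp only [Pi.smul_apply, dotProduct_smul, smul_eq_mul, Finset.mul_sum]
      exact Finset.sum_congr rfl fun _ _ => Finset.sum_congr rfl fun _ _ => mul_left_comm _ _ _)

theorem quadratureForm_apply (a : ι → ℝ) (M : ι → κ → Matrix (Fin m) (Fin m) ℝ)
    (u w : ι → κ → Fin m → ℝ) :
    quadratureForm a M u w = ∑ T, a T * ∑ i, (M T i *ᵥ u T i) ⬝ᵥ w T i := rfl

theorem sum_mul_sum_mulVec_dotProduct_le_sqrt_mul_sqrt {a : ι → ℝ}
    {M : ι → κ → Matrix (Fin m) (Fin m) ℝ} (ha : ∀ T, 0 ≤ a T) (hM : ∀ T i, (M T i).IsSymm)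
    (hM_nonneg : ∀ T i ξ, 0 ≤ (M T i *ᵥ ξ) ⬝ᵥ ξ) (u w : ι → κ → Fin m → ℝ) :
    ∑ T, a T * ∑ i, (M T i *ᵥ u T i) ⬝ᵥ w T i ≤
      √(∑ T, a T * ∑ i, (M T i *ᵥ u T i) ⬝ᵥ u T i) *
        √(∑ T, a T * ∑ i, (M T i *ᵥ w T i) ⬝ᵥ w T i) := by
  set B := quadratureForm a M
  have hB_nonneg : ∀ v, 0 ≤ B v v := fun v =>
    Finset.sum_nonneg fun T _ => mul_nonneg (ha T) (Finset.sum_nonneg fun i _ => hM_nonneg T i _)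
  have hB_symm : B w u = B u w := by
    simp only [B, quadratureForm_apply, (hM _ _).mulVec_dotProduct_comm (w _ _)]
  have hCS := B.apply_mul_apply_le_of_forall_zero_le hB_nonneg u w
  rw [hB_symm, ← sq] at hCS
  change B u w ≤ √(B u u) * √(B w w)
  rw [← Real.sqrt_mul (hB_nonneg u)]
  exact Real.le_sqrt_of_sq_le hCS

end Quadrature

section Mesh

variable {E ι κ : Type*} [NormedAddCommGroup E] [NormedSpace ℝ E] [MeasurableSpace E]
  (μ : Measure E) [Fintype ι] [Fintype κ] {m : ℕ} (L : E → Matrix (Fin m) (Fin m) ℝ)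
  (r : ι → κ → E) {s : ℝ}

theorem mul_sum_setIntegral_le_sum_quadrature [FiniteDimensional ℝ E] [BorelSpace E]
    [IsFiniteMeasureOnCompacts μ] {l₀ : ℝ}
    (hl₀ : 0 ≤ l₀) (hs : 0 ≤ s) (hL : ∀ x ξ, l₀ * (ξ ⬝ᵥ ξ) ≤ (L x *ᵥ ξ) ⬝ᵥ ξ)
    (φ : ι → E →ᵃ[ℝ] (Fin m → ℝ)) :
    l₀ / s * ∑ T, ∫ x in convexHull ℝ (range (r T)), φ T x ⬝ᵥ φ T x ∂μ ≤
      ∑ T, μ.real (convexHull ℝ (range (r T))) / s *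
        ∑ i, (L (r T i) *ᵥ φ T (r T i)) ⬝ᵥ φ T (r T i) := by
  rw [Finset.mul_sum]
  refine Finset.sum_le_sum fun T _ => ?_
  calc l₀ / s * ∫ x in convexHull ℝ (range (r T)), φ T x ⬝ᵥ φ T x ∂μ
      ≤ l₀ / s * (μ.real (convexHull ℝ (range (r T))) * ∑ i, φ T (r T i) ⬝ᵥ φ T (r T i)) := by
        gcongr; exact setIntegral_dotProduct_self_le μ (r T) (φ T)
    _ = μ.real (convexHull ℝ (range (r T))) / s * ∑ i, l₀ * (φ T (r T i) ⬝ᵥ φ T (r T i)) := by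
        rw [← Finset.mul_sum]; ring
    _ ≤ _ := by gcongr with i; exact hL _ _

theorem sum_quadrature_le_mul_sum_setIntegral {l₁ c : ℝ} (hl₁ : 0 ≤ l₁) (hs : 0 ≤ s)
    (hL : ∀ x ξ, (L x *ᵥ ξ) ⬝ᵥ ξ ≤ l₁ * (ξ ⬝ᵥ ξ)) (φ : ι → E →ᵃ[ℝ] (Fin m → ℝ))
    (hφ : ∀ T, μ.real (convexHull ℝ (range (r T))) * ∑ i, φ T (r T i) ⬝ᵥ φ T (r T i) ≤
      c * ∫ x in convexHull ℝ (range (r T)), φ T x ⬝ᵥ φ T x ∂μ) :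
    ∑ T, μ.real (convexHull ℝ (range (r T))) / s *
        ∑ i, (L (r T i) *ᵥ φ T (r T i)) ⬝ᵥ φ T (r T i) ≤
      l₁ * c / s * ∑ T, ∫ x in convexHull ℝ (range (r T)), φ T x ⬝ᵥ φ T x ∂μ := by
  rw [Finset.mul_sum]
  refine Finset.sum_le_sum fun T _ => ?_
  calc μ.real (convexHull ℝ (range (r T))) / s * ∑ i, (L (r T i) *ᵥ φ T (r T i)) ⬝ᵥ φ T (r T i)
      ≤ μ.real (convexHull ℝ (range (r T))) / s * ∑ i, l₁ * (φ T (r T i) ⬝ᵥ φ T (r T i)) := by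
        gcongr with i; exact hL _ _
    _ = l₁ / s * (μ.real (convexHull ℝ (range (r T))) * ∑ i, φ T (r T i) ⬝ᵥ φ T (r T i)) := by
        rw [← Finset.mul_sum]; ring
    _ ≤ l₁ / s * (c * ∫ x in convexHull ℝ (range (r T)), φ T x ⬝ᵥ φ T x ∂μ) := by
        exact mul_le_mul_of_nonneg_left (hφ T) (by positivity)
    _ = _ := by ring

end Mesh

theorem stmt_17_general (n : ℕ)
    (L : EuclideanSpace ℝ (Fin n) → Matrix (Fin n) (Fin n) ℝ)
    (l₀ l₁ : ℝ) (hl₀ : 0 < l₀) (hl : l₀ ≤ l₁)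
    (hLsym : ∀ x, (L x)ᵀ = L x)
    (hLbound : ∀ (x : EuclideanSpace ℝ (Fin n)) (ξ : Fin n → ℝ),
      l₀ * (ξ ⬝ᵥ ξ) ≤ ((L x) *ᵥ ξ) ⬝ᵥ ξ ∧ ((L x) *ᵥ ξ) ⬝ᵥ ξ ≤ l₁ * (ξ ⬝ᵥ ξ)) :
    ∀ ρ : ℝ, 0 < ρ → ∃ C₀ > (0:ℝ), ∃ C₁ > (0:ℝ),
      ∀ (ι : Type) [Fintype ι],
      ∀ r : ι → Fin (n + 1) → EuclideanSpace ℝ (Fin n),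
        (∀ T : ι, AffineIndependent ℝ (r T)) →
        -- shape regularity: every element contains a ball of radius comparable to
        -- its diameter
        (∀ T : ι, ∃ (z : EuclideanSpace ℝ (Fin n)) (ρin : ℝ), 0 < ρin ∧
          Metric.ball z ρin ⊆ convexHull ℝ (Set.range (r T)) ∧
          Metric.diam (convexHull ℝ (Set.range (r T))) ≤ ρ * ρin) →
        -- the elements have pairwise disjoint interiors
        (Pairwise fun T T' : ι =>
          Disjoint (interior (convexHull ℝ (Set.range (r T))))
            (interior (convexHull ℝ (Set.range (r T'))))) →
        -- φ, ψ elementwise linear (affine) vector fields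
        ∀ φ ψ : ι → (EuclideanSpace ℝ (Fin n) →ᵃ[ℝ] (Fin n → ℝ)),
          C₀ * (∑ T : ι, ∫ x in convexHull ℝ (Set.range (r T)), (φ T x) ⬝ᵥ (φ T x))
            ≤ (∑ T : ι, ((volume (convexHull ℝ (Set.range (r T)))).toReal / (n + 1)) *
                 ∑ i, ((L (r T i)) *ᵥ (φ T (r T i))) ⬝ᵥ (φ T (r T i))) ∧
          (∑ T : ι, ((volume (convexHull ℝ (Set.range (r T)))).toReal / (n + 1)) *
               ∑ i, ((L (r T i)) *ᵥ (φ T (r T i))) ⬝ᵥ (ψ T (r T i)))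
            ≤ C₁ * Real.sqrt (∑ T : ι, ∫ x in convexHull ℝ (Set.range (r T)),
                  (φ T x) ⬝ᵥ (φ T x))
                * Real.sqrt (∑ T : ι, ∫ x in convexHull ℝ (Set.range (r T)),
                  (ψ T x) ⬝ᵥ (ψ T x)) := by
  intro ρ _
  obtain ⟨c, hc, hvertex⟩ := exists_measureReal_mul_sum_vertex_le_setIntegral
    (volume : Measure (EuclideanSpace ℝ (Fin n))) (Fin (n + 1)) n
  have hl₁ : 0 < l₁ := hl₀.trans_le hl
  refine ⟨l₀ / (n + 1), by positivity, l₁ * c / (n + 1), by positivity,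
    fun ι _ r hr _ _ φ ψ => ⟨mul_sum_setIntegral_le_sum_quadrature volume L r (s := n + 1) hl₀.le
      (by positivity) (fun x ξ => (hLbound x ξ).1) φ, ?_⟩⟩
  have hupper := fun χ => sum_quadrature_le_mul_sum_setIntegral volume L r (s := n + 1) hl₁.le
    (by positivity) (fun x ξ => (hLbound x ξ).2) χ fun T =>
      hvertex ⟨r T, hr T, (hr T).affineSpan_eq_top_iff_card_eq_finrank_add_one.mpr (by simp)⟩ (χ T)
  calc _ ≤ _ := sum_mul_sum_mulVec_dotProduct_le_sqrt_mul_sqrt (fun T => by positivity)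
          (fun T i => hLsym _)
          (fun T i ξ => (mul_nonneg hl₀.le (dotProduct_self_nonneg ξ)).trans (hLbound _ ξ).1)
          (fun T i => φ T (r T i)) (fun T i => ψ T (r T i))
    _ ≤ √(l₁ * c / (n + 1) * ∑ T, ∫ x in convexHull ℝ (range (r T)), φ T x ⬝ᵥ φ T x) *
          √(l₁ * c / (n + 1) * ∑ T, ∫ x in convexHull ℝ (range (r T)), ψ T x ⬝ᵥ ψ T x) := by
        gcongr <;> exact hupper _
    _ = _ := by
        rw [Real.sqrt_mul (by positivity), Real.sqrt_mul (by positivity), mul_mul_mul_comm,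
          Real.mul_self_sqrt (by positivity), mul_assoc]

theorem stmt_17 (n : ℕ) (hn : n = 2 ∨ n = 3)
    (L : EuclideanSpace ℝ (Fin n) → Matrix (Fin n) (Fin n) ℝ)
    (l₀ l₁ : ℝ) (hl₀ : 0 < l₀) (hl : l₀ ≤ l₁)
    (hLmeas : ∀ i j, Measurable fun x => L x i j)
    (hLsym : ∀ x, (L x)ᵀ = L x)
    (hLbound : ∀ (x : EuclideanSpace ℝ (Fin n)) (ξ : Fin n → ℝ),
      l₀ * (ξ ⬝ᵥ ξ) ≤ ((L x) *ᵥ ξ) ⬝ᵥ ξ ∧ ((L x) *ᵥ ξ) ⬝ᵥ ξ ≤ l₁ * (ξ ⬝ᵥ ξ)) :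
    ∀ ρ : ℝ, 0 < ρ → ∃ C₀ > (0:ℝ), ∃ C₁ > (0:ℝ),
      ∀ (ι : Type) [Fintype ι],
      ∀ r : ι → Fin (n + 1) → EuclideanSpace ℝ (Fin n),
        (∀ T : ι, AffineIndependent ℝ (r T)) →
        -- shape regularity: every element contains a ball of radius comparable to
        -- its diameter
        (∀ T : ι, ∃ (z : EuclideanSpace ℝ (Fin n)) (ρin : ℝ), 0 < ρin ∧
          Metric.ball z ρin ⊆ convexHull ℝ (Set.range (r T)) ∧
          Metric.diam (convexHull ℝ (Set.range (r T))) ≤ ρ * ρin) →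
        -- the elements have pairwise disjoint interiors
        (Pairwise fun T T' : ι =>
          Disjoint (interior (convexHull ℝ (Set.range (r T))))
            (interior (convexHull ℝ (Set.range (r T'))))) →
        -- φ, ψ elementwise linear (affine) vector fields
        ∀ φ ψ : ι → (EuclideanSpace ℝ (Fin n) →ᵃ[ℝ] (Fin n → ℝ)),
          C₀ * (∑ T : ι, ∫ x in convexHull ℝ (Set.range (r T)), (φ T x) ⬝ᵥ (φ T x))
            ≤ (∑ T : ι, ((volume (convexHull ℝ (Set.range (r T)))).toReal / (n + 1)) *
                 ∑ i, ((L (r T i)) *ᵥ (φ T (r T i))) ⬝ᵥ (φ T (r T i))) ∧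
          (∑ T : ι, ((volume (convexHull ℝ (Set.range (r T)))).toReal / (n + 1)) *
               ∑ i, ((L (r T i)) *ᵥ (φ T (r T i))) ⬝ᵥ (ψ T (r T i)))
            ≤ C₁ * Real.sqrt (∑ T : ι, ∫ x in convexHull ℝ (Set.range (r T)),
                  (φ T x) ⬝ᵥ (φ T x))
                * Real.sqrt (∑ T : ι, ∫ x in convexHull ℝ (Set.range (r T)),
                  (ψ T x) ⬝ᵥ (ψ T x)) :=
  stmt_17_general n L l₀ l₁ hl₀ hl hLsym hLbound
end
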